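/- Nonnegativity of the baseline-policy gap: for any sequence of learner policies π_1, …, π_N generating state distributions d^{π_n}_t from an initial distribution d_0, the quantity Δ_N := −(1/N) Σ_{n=1}^{N} ℓ_n(π⊕) is nonnegative, where ℓ_n(π) := −Σ_{t=0}^{H−1} E_{s∼d^{π_n}_t}[ A^{f⁺}_t(s, π) ] and π⊕ is the max⁺-aggregation policy. -/
import Mathlib


open scoped BigOperators

/-- Expectation of a real-valued function under a probability mass function on a finite type. -/
noncomputable def pexp {α : Type*} [Fintype α] (p : PMF α) (f : α → ℝ) : ℝ :=
  ∑ a, (p a).toReal * f a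


lemma pexp_sum_toReal_one {α : Type*} [Fintype α] (p : PMF α) :
    ∑ a, (p a).toReal = 1 := by
  have h1 : ∑' a, p a = 1 := p.tsum_coe
  rw [tsum_fintype] at h1
  rw [← ENNReal.toReal_sum (fun a _ => PMF.apply_ne_top p a), h1, ENNReal.toReal_one]

lemma pexp_mono {α : Type*} [Fintype α] (p : PMF α) {f g : α → ℝ}
    (h : ∀ a, f a ≤ g a) : pexp p f ≤ pexp p g := by
  apply Finset.sum_le_sum
  intro a _
  exact mul_le_mul_of_nonneg_left (h a) ENNReal.toReal_nonneg

lemma pexp_const {α : Type*} [Fintype α] (p : PMF α) (c : ℝ) :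
    pexp p (fun _ => c) = c := by
  unfold pexp
  rw [← Finset.sum_mul, pexp_sum_toReal_one, one_mul]

lemma pexp_le_const {α : Type*} [Fintype α] (p : PMF α) {f : α → ℝ} {c : ℝ}
    (h : ∀ a, f a ≤ c) : pexp p f ≤ c := by
  calc pexp p f ≤ pexp p (fun _ => c) := pexp_mono p h
    _ = c := pexp_const p c

lemma pexp_nonneg {α : Type*} [Fintype α] (p : PMF α) {f : α → ℝ}
    (h : ∀ a, 0 ≤ f a) : 0 ≤ pexp p f := by
  apply Finset.sum_nonneg
  intro a _
  exact mul_nonneg ENNReal.toReal_nonneg (h a)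

lemma pexp_pure {α : Type*} [Fintype α] [DecidableEq α] (a : α) (f : α → ℝ) :
    pexp (PMF.pure a) f = f a := by
  unfold pexp
  rw [Finset.sum_eq_single a]
  · simp [PMF.pure_apply]
  · intro b _ hb
    simp [PMF.pure_apply, hb]
  · simp

lemma pexp_sub_const {α : Type*} [Fintype α] (p : PMF α) (f : α → ℝ) (c : ℝ) :
    pexp p (fun a => f a - c) = pexp p f - c := by
  unfold pexp
  simp only [mul_sub]
  rw [Finset.sum_sub_distrib, ← Finset.sum_mul, pexp_sum_toReal_one, one_mul]

/-- Nonnegativity of the baseline-policy gap: for any sequence of learner policies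
`π_1, …, π_N` generating state distributions `d^{π_n}_t` from an initial distribution `d₀`,
the quantity `Δ_N := −(1/N) Σ_{n=1}^{N} ℓ_n(π⊕)` is nonnegative, where
`ℓ_n(π) := −Σ_{t=0}^{H−1} E_{s∼d^{π_n}_t}[ A^{f⁺}_t(s, π) ]` and `π⊕` is the
max⁺-aggregation policy. -/
theorem maxplus_aggregation_Delta_nonneg
    {S A : Type*} [Fintype S] [Nonempty S] [Fintype A] [Nonempty A]
    (P : S → A → PMF S) (r : S → A → ℝ)
    (hr : ∀ s a, 0 ≤ r s a ∧ r s a ≤ 1)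
    (H : ℕ)
    (K : ℕ) (hK : 1 ≤ K)
    (πs : Fin K → ℕ → S → PMF A)
    (Vs : Fin K → ℕ → S → ℝ)
    (hVsH : ∀ k s, Vs k H s = 0)
    (hVs : ∀ k t, t < H → ∀ s,
      Vs k t s = pexp (πs k t s) (fun a => r s a + pexp (P s a) (Vs k (t + 1))))
    (fplus : ℕ → S → ℝ)
    (hfplus : ∀ t s, fplus t s = ⨆ k : Fin K, Vs k t s)
    (astar : ℕ → S → A)
    (hastar : ∀ t s a,
      r s a + pexp (P s a) (fplus (t + 1)) - fplus t s ≤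
        r s (astar t s) + pexp (P s (astar t s)) (fplus (t + 1)) - fplus t s)
    (N : ℕ) (hN : 0 < N)
    (πn : Fin N → ℕ → S → PMF A)
    (d₀ : PMF S)
    (d : Fin N → ℕ → PMF S)
    (hd0 : ∀ n, d n 0 = d₀)
    (hd : ∀ n t, d n (t + 1) = (d n t).bind fun s => (πn n t s).bind fun a => P s a)
    (loss : Fin N → (ℕ → S → PMF A) → ℝ)
    (hloss : ∀ n π, loss n π =
      -∑ t ∈ Finset.range H,
        pexp (d n t) (fun s =>
          pexp (π t s) (fun a => r s a + pexp (P s a) (fplus (t + 1)) - fplus t s))) :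
    0 ≤ -(1 / (N : ℝ)) * ∑ n, loss n (fun t s => PMF.pure (astar t s)) := by
  classical
  have hFinK : Nonempty (Fin K) := Fin.pos_iff_nonempty.mp hK
  have hge : ∀ k t s, Vs k t s ≤ fplus t s := by
    intro k t s
    rw [hfplus]
    exact le_ciSup (f := fun k : Fin K => Vs k t s) (Set.Finite.bddAbove (Set.finite_range _)) k
  have key : ∀ t s, t < H →
      0 ≤ r s (astar t s) + pexp (P s (astar t s)) (fplus (t + 1)) - fplus t s := by
    intro t s ht
    obtain ⟨k, hk⟩ := Finite.exists_max (fun k : Fin K => Vs k t s)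
    have hfk : fplus t s = Vs k t s := by
      rw [hfplus]
      exact le_antisymm (ciSup_le hk)
        (le_ciSup (f := fun k : Fin K => Vs k t s) (Set.Finite.bddAbove (Set.finite_range _)) k)
    have h1 : Vs k t s - fplus t s ≤
        pexp (πs k t s) (fun a => r s a + pexp (P s a) (fplus (t + 1)) - fplus t s) := by
      have heq : Vs k t s - fplus t s =
          pexp (πs k t s) (fun a => r s a + pexp (P s a) (Vs k (t + 1)) - fplus t s) := by
        rw [pexp_sub_const, ← hVs k t ht s]
      rw [heq]
      apply pexp_mono
      intro a
      have hmono : pexp (P s a) (Vs k (t + 1)) ≤ pexp (P s a) (fplus (t + 1)) :=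
        pexp_mono _ fun s' => hge k (t + 1) s'
      linarith
    have h2 : pexp (πs k t s) (fun a => r s a + pexp (P s a) (fplus (t + 1)) - fplus t s) ≤
        r s (astar t s) + pexp (P s (astar t s)) (fplus (t + 1)) - fplus t s :=
      pexp_le_const _ fun a => hastar t s a
    have : Vs k t s - fplus t s = 0 := by rw [hfk]; ring
    linarith
  have hloss_le : ∀ n, loss n (fun t s => PMF.pure (astar t s)) ≤ 0 := by
    intro n
    rw [hloss]
    rw [neg_nonpos]
    apply Finset.sum_nonneg
    intro t ht
    rw [Finset.mem_range] at ht
    apply pexp_nonneg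
    intro s
    rw [pexp_pure]
    exact key t s ht
  have hsum : ∑ n, loss n (fun t s => PMF.pure (astar t s)) ≤ 0 :=
    Finset.sum_nonpos fun n _ => hloss_le n
  have h0 : (0:ℝ) ≤ 1 / (N : ℝ) := by positivity
  nlinarith
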